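/- arXiv:1212.3563 — 4 statements merged into one kernel-verified Lean document; each statement's English description precedes it below -/
import Mathlib

section
/- For a simplicial set X the following two conditions are equivalent: (i) for every n ≥ 3 and all pairs 0 ≤ i < j ≤ n, the map X_n → X_{{0,…,i}∪{j,…,n}} ×_{X_{{i,j}}} X_{{i,…,j}} is a bijection; (ii) the same maps are bijections for every n ≥ 3 and those pairs 0 ≤ i < j ≤ n with i = 0 or j = n. -/
open CategoryTheory Simplicial

universe u

namespace Seg

/-- Restriction of a simplex along a monotone map of standard simplices. -/
def res (X : SSet.{u}) {m n : ℕ} (f : Fin (m + 1) →o Fin (n + 1)) : X _⦋n⦌ → X _⦋m⦌ :=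
  X.map (SimplexCategory.mkHom f).op

/-- The monotone injection `[l] → [n]`, `k ↦ i + k`, i.e. the inclusion of the
interval `{i, i+1, …, i+l}` into `{0, …, n}`. -/
def interval {n : ℕ} (i l : ℕ) (h : i + l ≤ n) : Fin (l + 1) →o Fin (n + 1) where
  toFun k := ⟨i + k.1, by have := k.isLt; omega⟩
  monotone' := by
    intro a b hab
    have h' : a.1 ≤ b.1 := hab
    simp only [Fin.mk_le_mk]
    omega

/-- The monotone injection with image `{0,…,i} ∪ {j,…,n}` (where `i < j ≤ n`). -/
def outer {n : ℕ} (i j : ℕ) (hij : i < j) (hj : j ≤ n) :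
    Fin (n - (j - i) + 2) →o Fin (n + 1) where
  toFun k := ⟨if k.1 ≤ i then k.1 else k.1 + (j - i) - 1, by have := k.isLt; split <;> omega⟩
  monotone' := by
    intro a b hab
    have h' : a.1 ≤ b.1 := hab
    have ha := a.isLt
    have hb := b.isLt
    simp only [Fin.mk_le_mk]
    split_ifs <;> omega

/-- The monotone map `[1] → [l]` sending `0 ↦ 0` and `1 ↦ l`. -/
def ends (l : ℕ) : Fin 2 →o Fin (l + 1) where
  toFun k := ⟨k.1 * l, by
    have hk : k.1 ≤ 1 := Nat.lt_succ_iff.mp k.isLt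
    have h2 : k.1 * l ≤ 1 * l := Nat.mul_le_mul hk (le_refl l)
    omega⟩
  monotone' := by
    intro a b hab
    have h' : a.1 ≤ b.1 := hab
    simp only [Fin.mk_le_mk]
    exact Nat.mul_le_mul h' (le_refl l)

/-- The map `[0] → [n]` picking out the vertex `i`. -/
def vert {n : ℕ} (i : ℕ) (h : i ≤ n) : Fin 1 →o Fin (n + 1) where
  toFun _ := ⟨i, by omega⟩
  monotone' := fun _ _ _ => le_refl _

/-- The monotone surjection `[m+1] → [m]` hitting `i` twice; restriction along it is the
degeneracy `s_i : X_m → X_{m+1}`. -/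
def degen {m : ℕ} (i : ℕ) (h : i ≤ m) : Fin (m + 2) →o Fin (m + 1) where
  toFun k := ⟨if k.1 ≤ i then k.1 else k.1 - 1, by have := k.isLt; split <;> omega⟩
  monotone' := by
    intro a b hab
    have h' : a.1 ≤ b.1 := hab
    simp only [Fin.mk_le_mk]
    split_ifs <;> omega

/-- The 2-Segal map associated to `0 ≤ i < j ≤ n`, i.e. the canonical map
`X_n → X_{{0,…,i}∪{j,…,n}} ×_{X_{{i,j}}} X_{{i,…,j}}`, is a bijection.  (A map into a
fiber product of sets is a bijection iff every compatible pair has a unique preimage.) -/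
def TwoSegalMapBij (X : SSet.{u}) (n i j : ℕ) (hij : i < j) (hj : j ≤ n) : Prop :=
  ∀ (a : X _⦋n - (j - i) + 1⦌) (b : X _⦋j - i⦌),
    res X (interval i 1 (by omega)) a = res X (ends (j - i)) b →
    ∃! x : X _⦋n⦌,
      res X (outer i j hij hj) x = a ∧ res X (interval i (j - i) (by omega)) x = b

/-- A simplicial set is 2-Segal if all the 2-Segal maps are bijections. -/
def IsTwoSegal (X : SSet.{u}) : Prop :=
  ∀ (n i j : ℕ), 3 ≤ n → ∀ (hij : i < j) (hj : j ≤ n), TwoSegalMapBij X n i j hij hj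

/-- A simplicial set is Segal (1-Segal) if for each `n ≥ 2` the map
`X_n → X_1 ×_{X_0} ⋯ ×_{X_0} X_1` (restriction to the edges `{k,k+1}`) is a bijection. -/
def IsSegal (X : SSet.{u}) : Prop :=
  ∀ (n : ℕ), 2 ≤ n → ∀ e : Fin n → X _⦋1⦌,
    (∀ (k : ℕ) (hk : k + 1 < n),
      res X (vert 1 (le_refl 1)) (e ⟨k, by omega⟩) =
        res X (vert 0 (Nat.zero_le 1)) (e ⟨k + 1, hk⟩)) →
    ∃! x : X _⦋n⦌, ∀ k : Fin n, res X (interval k.1 1 (by have := k.isLt; omega)) x = e k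

end Seg

/-!
A general pair `0 < i < j < n` is reduced to special pairs by pasting cartesian squares. The
special pair `(i, n)` glues `[n]` from `{0,…,i,n}` and `{i,…,n}`; inside `{i,…,n}` the special
pair `(0, j - i)` glues `{i,…,n}` from `{i,j,…,n}` and `{i,…,j}`; inside `{0,…,i,j,…,n}` the
special pair `(i, n - (j - i) + 1)` glues it from `{0,…,i,n}` and `{i,j,…,n}`. Pasting these
identifies `X_n` with `X_{0,…,i,j,…,n} ×_{X_{i,j}} X_{i,…,j}`. Pairs with `j = i + 1` are
trivial: the outer inclusion is then the identity of `[n]`.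
-/

namespace Seg

/-- Commutativity `f ∘ e = g ∘ e'` of the square is not part of the definition. -/
def IsGluing (X : SSet.{u}) {n p q : ℕ} (f : Fin (p + 1) →o Fin (n + 1))
    (g : Fin (q + 1) →o Fin (n + 1)) (e : Fin 2 →o Fin (p + 1)) (e' : Fin 2 →o Fin (q + 1)) :
    Prop :=
  ∀ (a : X _⦋p⦌) (b : X _⦋q⦌), res X e a = res X e' b →
    ∃! x : X _⦋n⦌, res X f x = a ∧ res X g x = b

/-- `outer i (i + d)` with the size of its domain as a free parameter, so that domains whose
sizes are only propositionally equal can be identified. -/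
def skip {p n : ℕ} (i d : ℕ) (h : p + d = n + 1) (hd : 0 < d) : Fin (p + 1) →o Fin (n + 1) where
  toFun k := ⟨if k.1 ≤ i then k.1 else k.1 + d - 1, by have := k.isLt; split <;> omega⟩
  monotone' a b hab := by
    have : a.1 ≤ b.1 := hab
    simp only [Fin.mk_le_mk]
    split_ifs <;> omega

@[simp]
lemma skip_val {p n : ℕ} (i d : ℕ) (h : p + d = n + 1) (hd : 0 < d) (k : Fin (p + 1)) :
    (skip i d h hd k : ℕ) = if k.1 ≤ i then k.1 else k.1 + d - 1 := rfl

@[simp]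
lemma interval_val {n : ℕ} (i l : ℕ) (h : i + l ≤ n) (k : Fin (l + 1)) :
    (interval i l h k : ℕ) = i + k := rfl

@[simp]
lemma ends_val (l : ℕ) (k : Fin 2) : (ends l k : ℕ) = k * l := rfl

section Gluing

variable {X : SSet.{u}}

lemma res_res {l m n : ℕ} (f : Fin (m + 1) →o Fin (l + 1)) (g : Fin (l + 1) →o Fin (n + 1))
    (x : X _⦋n⦌) : res X f (res X g x) = res X (g.comp f) x := by
  simp only [res, ← Functor.map_comp_apply]
  rfl

lemma res_id {n : ℕ} (x : X _⦋n⦌) : res X OrderHom.id x = x :=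
  Functor.map_id_apply X _ x

lemma isGluing_id {n : ℕ} (g : Fin 2 →o Fin (n + 1)) :
    IsGluing X OrderHom.id g g (OrderHom.id : Fin 2 →o Fin 2) := by
  intro a b hab
  refine ⟨a, ⟨res_id a, ?_⟩, fun x hx => (res_id x).symm.trans hx.1⟩
  rw [hab, res_id]

/-- Pasting: if `[n] = P ∪ Q` along `e₁, e₁'`, `Q = R ∪ B` along `e₂, e₂'` and `O = P ∪ R`
along `e₁, e₃'` are cartesian, then so is `[n] = O ∪ B` along `e, e₂'`. -/
theorem IsGluing.paste {n p q r o b : ℕ}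
    {f₁ : Fin (p + 1) →o Fin (n + 1)} {g₁ : Fin (q + 1) →o Fin (n + 1)}
    {e₁ : Fin 2 →o Fin (p + 1)} {e₁' : Fin 2 →o Fin (q + 1)}
    {f₂ : Fin (r + 1) →o Fin (q + 1)} {g₂ : Fin (b + 1) →o Fin (q + 1)}
    {e₂ : Fin 2 →o Fin (r + 1)} {e₂' : Fin 2 →o Fin (b + 1)}
    {f₃ : Fin (p + 1) →o Fin (o + 1)} {g₃ : Fin (r + 1) →o Fin (o + 1)}
    {e₃' : Fin 2 →o Fin (r + 1)}
    {f : Fin (o + 1) →o Fin (n + 1)} {g : Fin (b + 1) →o Fin (n + 1)} {e : Fin 2 →o Fin (o + 1)}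
    (h₁ : IsGluing X f₁ g₁ e₁ e₁') (h₂ : IsGluing X f₂ g₂ e₂ e₂') (h₃ : IsGluing X f₃ g₃ e₁ e₃')
    (hf₁ : f.comp f₃ = f₁) (hfg : f.comp g₃ = g₁.comp f₂) (hg : g₁.comp g₂ = g)
    (he₁' : f₂.comp e₃' = e₁') (hw₃ : f₃.comp e₁ = g₃.comp e₃') (he : g₃.comp e₂ = e) :
    IsGluing X f g e e₂' := by
  intro a β hab
  have hA : res X e₂ (res X g₃ a) = res X e₂' β := by rw [res_res, he, hab]
  obtain ⟨c, ⟨hcA, hcβ⟩, hc_uniq⟩ := h₂ _ _ hA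
  have hA' : res X e₁ (res X f₃ a) = res X e₁' c := by
    rw [res_res, hw₃, ← he₁', ← res_res, ← res_res, hcA, res_res]
  obtain ⟨x, ⟨hxA', hxc⟩, hx_uniq⟩ := h₁ _ _ hA'
  have ha : res X e₁ (res X f₃ a) = res X e₃' (res X g₃ a) := by rw [res_res, hw₃, ← res_res]
  obtain ⟨_, -, ha_uniq⟩ := h₃ _ _ ha
  refine ⟨x, ⟨?_, ?_⟩, fun y ⟨hya, hyβ⟩ => hx_uniq y ⟨?_, ?_⟩⟩
  · rw [ha_uniq (res X f x) ⟨by rw [res_res, hf₁, hxA'], by rw [res_res, hfg, ← res_res, hxc, hcA]⟩,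
      ha_uniq a ⟨rfl, rfl⟩]
  · rw [← hg, ← res_res, hxc, hcβ]
  · rw [← hf₁, ← res_res, hya]
  · refine hc_uniq _ ⟨?_, ?_⟩
    · rw [res_res, ← hfg, ← res_res, hya]
    · rw [res_res, hg, hyβ]

lemma twoSegalMapBij_iff {n i j p d : ℕ} (hij : i < j) (hj : j ≤ n) (hp : p + d = n + 1)
    (hd : j - i = d) :
    TwoSegalMapBij X n i j hij hj ↔
      IsGluing X (skip i d hp (by omega)) (interval i d (by omega)) (interval i 1 (by omega))
        (ends d) := by
  subst hd
  obtain rfl : p = n - (j - i) + 1 := by omega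
  rfl

lemma twoSegalMapBij_succ {n i : ℕ} (hij : i < i + 1) (hj : i + 1 ≤ n) :
    TwoSegalMapBij X n i (i + 1) hij hj := by
  rw [twoSegalMapBij_iff hij hj (p := n) rfl (by omega)]
  have hf : skip i 1 rfl one_pos = (OrderHom.id : Fin (n + 1) →o Fin (n + 1)) := by
    ext k; simp
  have he : ends 1 = OrderHom.id := by
    ext k; simp
  rw [hf, he]
  exact isGluing_id _

theorem twoSegalMapBij_of_paste {n i j : ℕ} (hij : i < j) (hj : j ≤ n)
    (h₁ : TwoSegalMapBij X n i n (by omega) le_rfl)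
    (h₂ : TwoSegalMapBij X (n - i) 0 (j - i) (by omega) (by omega))
    (h₃ : TwoSegalMapBij X (n - (j - i) + 1) i (n - (j - i) + 1) (by omega) le_rfl) :
    TwoSegalMapBij X n i j hij hj := by
  rw [twoSegalMapBij_iff (p := i + 1) (d := n - i) _ _ (by omega) rfl] at h₁
  rw [twoSegalMapBij_iff (p := n - j + 1) (d := j - i) _ _ (by omega) (by omega)] at h₂
  rw [twoSegalMapBij_iff (p := i + 1) (d := n - j + 1) _ _ (by omega) (by omega)] at h₃
  rw [twoSegalMapBij_iff (p := n - (j - i) + 1) (d := j - i) _ _ (by omega) rfl]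
  refine h₁.paste h₂ h₃ ?_ ?_ ?_ ?_ ?_ ?_ <;> ext k <;> simp
  all_goals first | (split_ifs <;> omega) | (fin_cases k <;> simp; omega)

end Gluing

/-- For a simplicial set `X`, the 2-Segal maps for all pairs `0 ≤ i < j ≤ n` (with `n ≥ 3`)
are bijections iff this holds for those pairs with `i = 0` or `j = n`. -/
theorem twoSegal_iff_special_pairs (X : SSet.{u}) :
    (∀ (n i j : ℕ), 3 ≤ n → ∀ (hij : i < j) (hj : j ≤ n), TwoSegalMapBij X n i j hij hj) ↔
      (∀ (n i j : ℕ), 3 ≤ n → ∀ (hij : i < j) (hj : j ≤ n), (i = 0 ∨ j = n) →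
        TwoSegalMapBij X n i j hij hj) := by
  refine ⟨fun H n i j hn hij hj _ => H n i j hn hij hj, fun H n i j hn hij hj => ?_⟩
  by_cases hspecial : i = 0 ∨ j = n
  · exact H n i j hn hij hj hspecial
  obtain rfl | hgap : j = i + 1 ∨ i + 1 < j := by omega
  · exact twoSegalMapBij_succ hij hj
  · exact twoSegalMapBij_of_paste hij hj (H n i n hn _ _ (Or.inr rfl))
      (H (n - i) 0 (j - i) (by omega) _ _ (Or.inl rfl))
      (H (n - (j - i) + 1) i _ (by omega) _ _ (Or.inr rfl))

end Seg
end

section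
/- Let C be a set and α : C × C → C × C a map, written α(x,y) = (x • y, x ∗ y). Then α satisfies the pentagon equation α_{23} ∘ α_{13} ∘ α_{12} = α_{12} ∘ α_{23} (as self-maps of C × C × C) if and only if for all x, y, z ∈ C the following three identities hold: (x • y) • z = x • (y • z); (x ∗ y) • ((x • y) ∗ z) = x ∗ (y • z); and (x ∗ y) ∗ ((x • y) ∗ z) = y ∗ z. In particular, the first component • of any set-theoretic solution of the pentagon equation is an associative binary operation on C. -/
universe u

namespace Pentagon

variable {C : Type u}

/-- `α` applied to the first two coordinates. -/
def a12 (α : C × C → C × C) : C × C × C → C × C × C :=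
  fun p => ((α (p.1, p.2.1)).1, (α (p.1, p.2.1)).2, p.2.2)

/-- `α` applied to the last two coordinates. -/
def a23 (α : C × C → C × C) : C × C × C → C × C × C :=
  fun p => (p.1, α (p.2.1, p.2.2))

/-- `α` applied to the first and third coordinates. -/
def a13 (α : C × C → C × C) : C × C × C → C × C × C :=
  fun p => ((α (p.1, p.2.2)).1, p.2.1, (α (p.1, p.2.2)).2)

/-- The first component of `α`, written `x • y`. -/
def bullet (α : C × C → C × C) (x y : C) : C := (α (x, y)).1

/-- The second component of `α`, written `x ∗ y`. -/
def star (α : C × C → C × C) (x y : C) : C := (α (x, y)).2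

/-- A map `α : C × C → C × C` satisfies the pentagon equation iff its two components
satisfy the three displayed identities; in particular the first component of any
set-theoretic solution of the pentagon equation is associative. -/
theorem pentagon_iff_identities (α : C × C → C × C) :
    ((a23 α ∘ a13 α ∘ a12 α = a12 α ∘ a23 α) ↔
      ((∀ x y z : C, bullet α (bullet α x y) z = bullet α x (bullet α y z)) ∧
       (∀ x y z : C,
         bullet α (star α x y) (star α (bullet α x y) z) = star α x (bullet α y z)) ∧
       (∀ x y z : C,
         star α (star α x y) (star α (bullet α x y) z) = star α y z))) ∧
    ((a23 α ∘ a13 α ∘ a12 α = a12 α ∘ a23 α) →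
      ∀ x y z : C, bullet α (bullet α x y) z = bullet α x (bullet α y z)) := by
  constructor
  · constructor
    · intro h
      have h' : ∀ p, (a23 α ∘ a13 α ∘ a12 α) p = (a12 α ∘ a23 α) p := fun p => congrFun h p
      refine ⟨fun x y z => ?_, fun x y z => ?_, fun x y z => ?_⟩
      · exact congrArg (fun q => q.1) (h' (x, y, z))
      · exact congrArg (fun q => q.2.1) (h' (x, y, z))
      · exact congrArg (fun q => q.2.2) (h' (x, y, z))
    · rintro ⟨h1, h2, h3⟩
      funext p
      obtain ⟨x, y, z⟩ := p
      simp only [Function.comp, a12, a23, a13]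
      exact Prod.ext (h1 x y z) (Prod.ext (h2 x y z) (h3 x y z))
  · intro h x y z
    exact congrArg (fun q => q.1) (congrFun h (x, y, z))

end Pentagon
end

section
/- Let G be a group and K a subgroup of G such that for every g ∈ G the subgroups K and gKg⁻¹ are commensurable, i.e. K ∩ gKg⁻¹ has finite index in both K and gKg⁻¹. Let G act diagonally on the powers of the set G/K of left cosets. Then: (1) for any two G-orbits O and O' of the action of G on (G/K)², the set of G-orbits of triples (x,y,z) ∈ (G/K)³ with (x,y) ∈ O and (y,z) ∈ O' is finite; (2) for every triple (x,y,z) ∈ (G/K)³, the stabilizer of (x,y,z) under the diagonal G-action is a subgroup of finite index in the stabilizer of the pair (x,z). -/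
/-!
The stabilizer of the coset `gK` is `gKg⁻¹`, so the hypothesis says that all point stabilizers of
`G/K` are commensurable. Translating by `G`, a triple whose consecutive pairs lie in the orbits of
`(x, y)` and `(y, z)` is equivalent to one of the form `(x, y, h • z)` with `h ∈ Stab y`; hence
there are at most as many orbits of such triples as points in the orbit of `z` under `Stab y`,
whose size is the index of `Stab y ∩ Stab z` in `Stab y`. Likewise `Stab (x, y, z)` is
`Stab y ∩ Stab (x, z)`, of finite index in `Stab (x, z) ≤ Stab x` since `Stab y` and `Stab x` are
commensurable.
-/

universe u

namespace HeckeFin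

variable {G : Type u} [Group G]

def conjSub (g : G) (K : Subgroup G) : Subgroup G :=
  Subgroup.map (MulAut.conj g).toMonoidHom K

open MulAction

section Action

variable {α : Type*} [MulAction G α]

theorem relIndex_stabilizer_eq_ncard_orbit (H : Subgroup G) (z : α) :
    (stabilizer G z).relIndex H = (orbit H z).ncard := by
  have hstab : (stabilizer G z).subgroupOf H = stabilizer H z := by ext; rfl
  rw [Subgroup.relIndex, hstab, index_stabilizer]

theorem finite_orbit_of_relIndex_stabilizer_ne_zero {H : Subgroup G} {z : α}
    (h : (stabilizer G z).relIndex H ≠ 0) : (orbit H z).Finite :=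
  Set.finite_of_ncard_ne_zero (relIndex_stabilizer_eq_ncard_orbit H z ▸ h)

theorem exists_orbit_pair_eq [IsPretransitive G α] (p p' : α × α) :
    ∃ x y z : α, orbit G p = orbit G (x, y) ∧ orbit G p' = orbit G (y, z) := by
  obtain ⟨g, hg⟩ := exists_smul_eq G p'.1 p.2
  refine ⟨p.1, p.2, g • p'.2, rfl, ?_⟩
  rw [← orbit_smul g p', Prod.smul_def, hg]

theorem image_orbitRel_composable_subset (x y z : α) :
    Quotient.mk (orbitRel G (α × α × α)) ''
        {t | (t.1, t.2.1) ∈ orbit G (x, y) ∧ (t.2.1, t.2.2) ∈ orbit G (y, z)} ⊆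
      (fun c => Quotient.mk (orbitRel G (α × α × α)) (x, y, c)) '' orbit (stabilizer G y) z := by
  rintro _ ⟨t, ⟨⟨g, hg⟩, ⟨h, hh⟩⟩, rfl⟩
  simp only [Prod.smul_mk, Prod.ext_iff] at hg hh
  have hk : g⁻¹ * h ∈ stabilizer G y := by
    rw [mem_stabilizer_iff, mul_smul, hh.1, ← hg.2, inv_smul_smul]
  refine ⟨(⟨g⁻¹ * h, hk⟩ : stabilizer G y) • z, mem_orbit _ _, Quotient.sound ⟨g⁻¹, ?_⟩⟩
  simp only [Subgroup.mk_smul, Prod.smul_def, ← hg.1, ← hg.2, ← hh.2, inv_smul_smul, mul_smul]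

theorem finite_image_orbitRel_composable {x y z : α}
    (h : (stabilizer G z).relIndex (stabilizer G y) ≠ 0) :
    (Quotient.mk (orbitRel G (α × α × α)) ''
        {t | (t.1, t.2.1) ∈ orbit G (x, y) ∧ (t.2.1, t.2.2) ∈ orbit G (y, z)}).Finite :=
  ((finite_orbit_of_relIndex_stabilizer_ne_zero h).image _).subset
    (image_orbitRel_composable_subset x y z)

theorem stabilizer_triple_eq (x y z : α) :
    stabilizer G (x, y, z) = stabilizer G y ⊓ stabilizer G (x, z) := by
  ext g
  simp only [Subgroup.mem_inf, mem_stabilizer_iff, Prod.smul_mk, Prod.ext_iff]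
  tauto

theorem stabilizer_pair_le_left (x z : α) : stabilizer G (x, z) ≤ stabilizer G x := by
  intro g hg
  simp only [mem_stabilizer_iff, Prod.smul_mk, Prod.ext_iff] at hg ⊢
  exact hg.1

theorem stabilizer_triple_le_pair (x y z : α) :
    stabilizer G (x, y, z) ≤ stabilizer G (x, z) :=
  (stabilizer_triple_eq (G := G) x y z).symm ▸ inf_le_right

theorem relIndex_stabilizer_triple_ne_zero {x y z : α}
    (h : (stabilizer G y).relIndex (stabilizer G x) ≠ 0) :
    (stabilizer G (x, y, z)).relIndex (stabilizer G (x, z)) ≠ 0 := by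
  rw [stabilizer_triple_eq, Subgroup.inf_relIndex_right]
  exact mt (Subgroup.relIndex_eq_zero_of_le_right (stabilizer_pair_le_left (G := G) x z)) h

end Action

theorem stabilizer_mk_eq_conjSub (K : Subgroup G) (g : G) :
    stabilizer G (g : G ⧸ K) = conjSub g K := by
  have : (g : G ⧸ K) = g • ((1 : G) : G ⧸ K) := by simp
  rw [this, stabilizer_smul_eq_stabilizer_map_conj, stabilizer_quotient]
  rfl

theorem commensurable_stabilizer (K : Subgroup G)
    (hcomm : ∀ g : G, K.relIndex (conjSub g K) ≠ 0 ∧ (conjSub g K).relIndex K ≠ 0)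
    (a b : G ⧸ K) : Subgroup.Commensurable (stabilizer G a) (stabilizer G b) := by
  induction a using QuotientGroup.induction_on with | H g =>
  induction b using QuotientGroup.induction_on with | H h =>
  rw [stabilizer_mk_eq_conjSub, stabilizer_mk_eq_conjSub]
  exact (Subgroup.Commensurable.symm (hcomm g)).trans (hcomm h)

/-- Let `K ≤ G` be such that `K` and `gKg⁻¹` are commensurable for all
`g` (i.e. `K ∩ gKg⁻¹` has finite index in both).  Then:
(1) for any two `G`-orbits `O, O'` on `(G/K)²`, the set of `G`-orbits of triples
`(x,y,z) ∈ (G/K)³` with `(x,y) ∈ O` and `(y,z) ∈ O'` is finite;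
(2) for every triple `(x,y,z)`, its stabilizer is a finite-index subgroup of the
stabilizer of the pair `(x,z)`. -/
theorem hecke_finiteness (K : Subgroup G)
    (hcomm : ∀ g : G,
      K.relIndex (conjSub g K) ≠ 0 ∧ (conjSub g K).relIndex K ≠ 0) :
    (∀ O O' : Set ((G ⧸ K) × (G ⧸ K)),
      (∃ p, O = MulAction.orbit G p) → (∃ p', O' = MulAction.orbit G p') →
      Set.Finite
        (Quotient.mk (MulAction.orbitRel G ((G ⧸ K) × (G ⧸ K) × (G ⧸ K))) ''
          {t : (G ⧸ K) × (G ⧸ K) × (G ⧸ K) | (t.1, t.2.1) ∈ O ∧ (t.2.1, t.2.2) ∈ O'})) ∧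
    (∀ x y z : G ⧸ K,
      MulAction.stabilizer G ((x, y, z) : (G ⧸ K) × (G ⧸ K) × (G ⧸ K)) ≤
        MulAction.stabilizer G ((x, z) : (G ⧸ K) × (G ⧸ K)) ∧
      (MulAction.stabilizer G ((x, y, z) : (G ⧸ K) × (G ⧸ K) × (G ⧸ K))).relIndex
        (MulAction.stabilizer G ((x, z) : (G ⧸ K) × (G ⧸ K))) ≠ 0) := by
  refine ⟨?_, fun x y z => ⟨stabilizer_triple_le_pair x y z, ?_⟩⟩
  · rintro O O' ⟨p, rfl⟩ ⟨p', rfl⟩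
    obtain ⟨x, y, z, hp, hp'⟩ := exists_orbit_pair_eq (G := G) p p'
    rw [hp, hp']
    exact finite_image_orbitRel_composable (commensurable_stabilizer K hcomm z y).1
  · exact relIndex_stabilizer_triple_ne_zero (commensurable_stabilizer K hcomm y x).1

end HeckeFin
end

section
/- Let f : G' → G be a functor of groupoids. For each object x of G let Rf⁻¹(x) be the 2-fiber of f over x, and for each object x' of G' let f_{x'} : Aut_{G'}(x') → Aut_G(f(x')) be the induced group homomorphism. Say f is weakly proper if the induced map π_0(G') → π_0(G) on sets of isomorphism classes has finite fibers. Then: (1) every 2-fiber of f has finitely many isomorphism classes if and only if f is weakly proper and the image of every f_{x'} has finite index in Aut_G(f(x')); (2) every 2-fiber of f has finitely many isomorphism classes and all of its automorphism groups finite if and only if f is weakly proper and every f_{x'} has image of finite index and finite kernel; (3) every 2-fiber of f has finitely many isomorphism classes and only trivial automorphism groups if and only if f is weakly proper and every f_{x'} is injective with image of finite index. -/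
/-!
Forgetting the structure map sends `π₀ Rf⁻¹(x)` onto the classes of `π₀ G'` lying over
`[x]`. Once some `u₀ : f x' ≅ x` is fixed, the classes lying over `[x']` are exactly the
cosets `Aut (f x') ⧸ im f_{x'}`, via `a ↦ (x', a ≫ u₀)`; and the automorphism group of
`(x', u)` is `ker f_{x'}`. So `π₀` of every 2-fiber is finite iff `π₀ f` has finite fibres
and every `f_{x'}` has image of finite index, while finiteness or triviality of the
automorphism groups of the 2-fibers is the same condition on the kernels of the `f_{x'}`.
-/

universe v₁ v₂ u₁ u₂

open CategoryTheory

namespace GpdFiber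

variable {G' : Type u₁} {G : Type u₂} [Groupoid.{v₁} G'] [Groupoid.{v₂} G]

/-- The 2-fiber of a functor of groupoids `f : G' → G` over an object `x` of `G`:
objects are pairs `(x', u)` with `u : f x' → x` (an isomorphism, since `G` is a
groupoid), morphisms `(x',u) → (x'',u')` are maps `g : x' → x''` with `u' ∘ f g = u`. -/
structure Fiber (f : G' ⥤ G) (x : G) : Type (max u₁ v₂) where
  pt : G'
  u : f.obj pt ⟶ x

instance (f : G' ⥤ G) (x : G) : Category (Fiber f x) where
  Hom a b := {g : a.pt ⟶ b.pt // f.map g ≫ b.u = a.u}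
  id a := ⟨𝟙 a.pt, by simp⟩
  comp {a b c} g h := ⟨g.1 ≫ h.1, by rw [f.map_comp, Category.assoc, h.2, g.2]⟩
  id_comp g := Subtype.ext (Category.id_comp _)
  comp_id g := Subtype.ext (Category.comp_id _)
  assoc g h i := Subtype.ext (Category.assoc _ _ _)

/-- The isomorphism-class setoid of a category. -/
def isoSetoid (C : Type*) [Category C] : Setoid C where
  r X Y := Nonempty (X ≅ Y)
  iseqv := by
    constructor
    · intro X; exact ⟨Iso.refl X⟩
    · intro X Y h; exact ⟨h.some.symm⟩
    · intro X Y Z h₁ h₂; exact ⟨h₁.some.trans h₂.some⟩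

/-- The set of isomorphism classes of objects of a category. -/
def pi0 (C : Type*) [Category C] := Quotient (isoSetoid C)

/-- The induced map on isomorphism classes. -/
def pi0Map (f : G' ⥤ G) : pi0 G' → pi0 G :=
  Quotient.map' f.obj fun _ _ h => h.map fun i => f.mapIso i

/-- A functor of groupoids is weakly proper if the induced map on isomorphism classes
has finite fibers. -/
def WeaklyProper (f : G' ⥤ G) : Prop :=
  ∀ q : pi0 G, {p : pi0 G' | pi0Map f p = q}.Finite

/-- The homomorphism `Aut x' → Aut (f x')` induced by a functor. -/
def autHom (f : G' ⥤ G) (x' : G') : Aut x' →* Aut (f.obj x') where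
  toFun i := f.mapIso i
  map_one' := (Functor.mapIso_refl f x').trans rfl
  map_mul' i j := (f.mapIso_trans j i).trans rfl

instance (f : G' ⥤ G) (x : G) : Groupoid (Fiber f x) where
  inv {a b} g := ⟨Groupoid.inv g.1, by
    rw [← cancel_epi (f.map g.1), g.2, ← Category.assoc, ← f.map_comp, Groupoid.comp_inv,
      f.map_id, Category.id_comp]⟩
  inv_comp g := Subtype.ext (Groupoid.inv_comp _)
  comp_inv g := Subtype.ext (Groupoid.comp_inv _)

lemma pi0_mk_eq_mk_iff {C : Type*} [Category C] {a b : C} :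
    (Quotient.mk (isoSetoid C) a = Quotient.mk (isoSetoid C) b) ↔ Nonempty (a ≅ b) :=
  Quotient.eq

lemma nonempty_iso_iff_nonempty_hom {C : Type*} [Groupoid C] {a b : C} :
    Nonempty (a ≅ b) ↔ Nonempty (a ⟶ b) :=
  (Groupoid.isoEquivHom a b).nonempty_congr

lemma _root_.MonoidHom.injective_iff_subsingleton_ker {A B : Type*} [Group A] [Group B]
    (φ : A →* B) : Function.Injective φ ↔ Subsingleton φ.ker := by
  rw [← φ.ker_eq_bot_iff]
  exact ⟨fun h => h ▸ inferInstance, fun _ => Subgroup.eq_bot_of_subsingleton _⟩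

namespace Fiber

variable (f : G' ⥤ G)

def autEquivKer {x : G} (p : Fiber f x) : Aut p ≃ (autHom f p.pt).ker where
  toFun i := ⟨⟨i.hom.1, i.inv.1, congrArg Subtype.val i.hom_inv_id,
      congrArg Subtype.val i.inv_hom_id⟩, Iso.ext <| (cancel_mono p.u).1 <|
        i.hom.2.trans (Category.id_comp p.u).symm⟩
  invFun g := (Groupoid.isoEquivHom p p).symm (⟨g.1.hom, by
    rw [show f.map g.1.hom = 𝟙 _ from congrArg Iso.hom g.2, Category.id_comp]⟩ : p ⟶ p)
  left_inv i := Iso.ext (Subtype.ext rfl)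
  right_inv g := Subtype.ext (Iso.ext rfl)

end Fiber

section Pi0

variable (f : G' ⥤ G) (x : G)

def pi0Pt : pi0 (Fiber f x) → pi0 G' :=
  Quotient.map' Fiber.pt fun _ _ h => h.map fun i => (Groupoid.isoEquivHom _ _).symm i.hom.1

lemma pi0Map_pi0Pt (c : pi0 (Fiber f x)) : pi0Map f (pi0Pt f x c) = Quotient.mk _ x := by
  obtain ⟨a, rfl⟩ := Quotient.exists_rep c
  exact Quotient.sound ⟨(Groupoid.isoEquivHom _ _).symm a.u⟩

lemma range_pi0Pt : Set.range (pi0Pt f x) = {p | pi0Map f p = Quotient.mk _ x} := by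
  refine subset_antisymm (Set.range_subset_iff.mpr (pi0Map_pi0Pt f x)) fun p hp => ?_
  obtain ⟨x', rfl⟩ := Quotient.exists_rep p
  obtain ⟨u⟩ := pi0_mk_eq_mk_iff.mp hp
  exact ⟨Quotient.mk _ ⟨x', u.hom⟩, rfl⟩

variable {f x} {x' : G'} (u₀ : f.obj x' ⟶ x)

lemma mk_comp_eq_mk_comp_iff (a b : Aut (f.obj x')) :
    (Quotient.mk _ ⟨x', a.hom ≫ u₀⟩ : pi0 (Fiber f x)) = Quotient.mk _ ⟨x', b.hom ≫ u₀⟩ ↔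
      a⁻¹ * b ∈ (autHom f x').range := by
  rw [pi0_mk_eq_mk_iff, Iso.nonempty_iso_symm, nonempty_iso_iff_nonempty_hom]
  constructor
  · rintro ⟨g, hg⟩
    refine ⟨(Groupoid.isoEquivHom _ _).symm g, Iso.ext ?_⟩
    change f.map g = b.hom ≫ a.inv
    exact (Iso.eq_comp_inv a).mpr ((cancel_mono u₀).1 (by rw [Category.assoc]; exact hg))
  · rintro ⟨g, hg⟩
    have hg : f.map g.hom = b.hom ≫ a.inv := congrArg Iso.hom hg
    exact ⟨⟨g.hom, by
      change f.map g.hom ≫ a.hom ≫ u₀ = b.hom ≫ u₀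
      rw [hg, Category.assoc, Iso.inv_hom_id_assoc a]⟩⟩

def cosetToPi0 : Aut (f.obj x') ⧸ (autHom f x').range → pi0 (Fiber f x) :=
  Quotient.lift (fun a => Quotient.mk _ ⟨x', a.hom ≫ u₀⟩) fun a b hab =>
    (mk_comp_eq_mk_comp_iff u₀ a b).mpr (QuotientGroup.leftRel_apply.mp hab)

lemma cosetToPi0_injective : Function.Injective (cosetToPi0 u₀) := by
  rintro ⟨a⟩ ⟨b⟩ h
  exact Quotient.sound <|
    QuotientGroup.leftRel_apply.mpr ((mk_comp_eq_mk_comp_iff u₀ a b).mp h)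

lemma range_cosetToPi0 : Set.range (cosetToPi0 u₀) = pi0Pt f x ⁻¹' {Quotient.mk _ x'} := by
  refine subset_antisymm (Set.range_subset_iff.mpr fun q => ?_) fun c hc => ?_
  · obtain ⟨a, rfl⟩ := Quotient.exists_rep q
    rfl
  obtain ⟨a, rfl⟩ := Quotient.exists_rep c
  obtain ⟨e⟩ := pi0_mk_eq_mk_iff.mp hc
  refine ⟨QuotientGroup.mk ((Groupoid.isoEquivHom _ _).symm
    (f.map e.inv ≫ a.u ≫ Groupoid.inv u₀)), Quotient.sound ⟨(Groupoid.isoEquivHom _ _).symm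
      ⟨e.inv, ?_⟩⟩⟩
  simp

end Pi0

section Properness

variable (f : G' ⥤ G)

lemma weaklyProper_of_finite_pi0_fiber (h : ∀ x, Finite (pi0 (Fiber f x))) :
    WeaklyProper f := by
  intro q
  obtain ⟨x, rfl⟩ := Quotient.exists_rep q
  rw [← range_pi0Pt]
  exact Set.finite_range _

lemma index_autHom_range_ne_zero (x' : G') (h : Finite (pi0 (Fiber f (f.obj x')))) :
    (autHom f x').range.index ≠ 0 :=
  Subgroup.index_ne_zero_iff_finite.mpr (Finite.of_injective _ (cosetToPi0_injective (𝟙 _)))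

lemma finite_pi0_fiber (hw : WeaklyProper f) (hi : ∀ x' : G', (autHom f x').range.index ≠ 0)
    (x : G) : Finite (pi0 (Fiber f x)) := by
  have hfib : ∀ p ∈ {p | pi0Map f p = Quotient.mk _ x}, (pi0Pt f x ⁻¹' {p}).Finite := by
    intro p hp
    obtain ⟨x', rfl⟩ := Quotient.exists_rep p
    obtain ⟨u⟩ := pi0_mk_eq_mk_iff.mp hp
    have := Subgroup.index_ne_zero_iff_finite.mp (hi x')
    exact range_cosetToPi0 u.hom ▸ Set.finite_range _
  rw [← Set.finite_univ_iff]
  exact ((hw _).preimage' hfib).subset fun c _ => pi0Map_pi0Pt f x c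

lemma finite_pi0_fiber_iff :
    (∀ x : G, Finite (pi0 (Fiber f x))) ↔
      WeaklyProper f ∧ ∀ x' : G', (autHom f x').range.index ≠ 0 :=
  ⟨fun h => ⟨weaklyProper_of_finite_pi0_fiber f h,
      fun x' => index_autHom_range_ne_zero f x' (h _)⟩,
    fun h => finite_pi0_fiber f h.1 h.2⟩

lemma forall_fiber_aut_iff (P : Type v₁ → Prop)
    (hP : ∀ {α β : Type v₁}, α ≃ β → (P α ↔ P β)) :
    (∀ (x : G) (p : Fiber f x), P (Aut p)) ↔ ∀ x' : G', P (autHom f x').ker :=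
  ⟨fun h x' => (hP (Fiber.autEquivKer f ⟨x', 𝟙 _⟩)).mp (h _ _),
    fun h _ p => (hP (Fiber.autEquivKer f p)).mpr (h p.pt)⟩

end Properness

/-- characterizations of (2-fiberwise) properness of a functor of
groupoids `f` in terms of weak properness and the induced homomorphisms on
automorphism groups. -/
theorem properness_characterizations (f : G' ⥤ G) :
    ((∀ x : G, Finite (pi0 (Fiber f x))) ↔
      (WeaklyProper f ∧ ∀ x' : G', (autHom f x').range.index ≠ 0)) ∧
    ((∀ x : G, Finite (pi0 (Fiber f x)) ∧ ∀ p : Fiber f x, Finite (Aut p)) ↔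
      (WeaklyProper f ∧ ∀ x' : G',
        (autHom f x').range.index ≠ 0 ∧ Finite (autHom f x').ker)) ∧
    ((∀ x : G, Finite (pi0 (Fiber f x)) ∧ ∀ p : Fiber f x, Subsingleton (Aut p)) ↔
      (WeaklyProper f ∧ ∀ x' : G',
        Function.Injective (autHom f x') ∧ (autHom f x').range.index ≠ 0)) := by
  have hfin := forall_fiber_aut_iff f Finite fun e => e.finite_iff
  have hsub := forall_fiber_aut_iff f Subsingleton fun e => e.subsingleton_congr
  simp only [forall_and, finite_pi0_fiber_iff, hfin, hsub,
    MonoidHom.injective_iff_subsingleton_ker]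
  tauto

end GpdFiber
end
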